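/- Normal Pontryagin extremals of the characteristic optimal control problem are its solutions: let Δu be a control, ψ1 ∈ ℝ^m, and define the adjoint curve ψ(t) := ψ1 + ∫_{t0}^{t} W(s)ᵀ·Δu(s) ds. Assume the maximum condition A(t)ᵀ·ψ(t) = W(t)·E(t,Δu) holds for almost every t ∈ [t0,t1]. Then: (a) for every control Δv and every t ∈ [t0,t1], C(t, Δu+Δv) − C(t,Δu) − C(t,Δv) = ⟨E(t,Δv), ψ(t)⟩; and (b) if moreover, for some t ∈ [t0,t1], the set { C(t,w) : w a control with E(t,w) = 0 } is bounded below, then C(t,Δu) ≤ C(t,w) for every control w with E(t,w) = E(t,Δu). (Proposition 4.20 together with Lemma 4.22, part (i), sufficiency direction.) -/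

import Mathlib

open MeasureTheory Set

noncomputable section

/-- A control: a measurable, essentially bounded map `ℝ → ℝ^k`. -/
def IsControl (k : ℕ) (u : ℝ → Fin k → ℝ) : Prop :=
  Measurable u ∧ ∃ C : ℝ, ∀ᵐ t : ℝ, ‖u t‖ ≤ C

/-- The endpoint map `E_a(τ, Δu) = ∫_a^τ A(t) · Δu(t) dt`. -/
def epMap (k m : ℕ) (A : ℝ → Matrix (Fin m) (Fin k) ℝ) (a τ : ℝ)
    (u : ℝ → Fin k → ℝ) : Fin m → ℝ :=
  ∫ t in a..τ, (A t).mulVec (u t)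

/-- The reachable set `R(a,τ)` of the characteristic linear control system. -/
def reach (k m : ℕ) (A : ℝ → Matrix (Fin m) (Fin k) ℝ) (a τ : ℝ) :
    Set (Fin m → ℝ) :=
  { v | ∃ u, IsControl k u ∧ epMap k m A a τ u = v }

/-- The quadratic cost `C_a(τ, Δu) = ∫_a^τ ⟨Δu(t), W(t)·E_a(t,Δu)⟩ dt` of the
characteristic optimal control problem. -/
def cost (k m : ℕ) (A : ℝ → Matrix (Fin m) (Fin k) ℝ)
    (W : ℝ → Matrix (Fin k) (Fin m) ℝ) (a τ : ℝ) (u : ℝ → Fin k → ℝ) : ℝ :=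
  ∫ t in a..τ, dotProduct (u t) ((W t).mulVec (epMap k m A a t u))

/-- The set of costs of controls steering the system from `0` at time `a`
to `v` at time `τ`. -/
def costSet (k m : ℕ) (A : ℝ → Matrix (Fin m) (Fin k) ℝ)
    (W : ℝ → Matrix (Fin k) (Fin m) ℝ) (a τ : ℝ) (v : Fin m → ℝ) : Set ℝ :=
  { c | ∃ u, IsControl k u ∧ epMap k m A a τ u = v ∧ cost k m A W a τ u = c }

/-!
Expanding the quadratic cost, `C(u + v) - C(u) - C(v)` is the integral of the cross terms
`⟨u, W E(·, v)⟩ + ⟨v, W E(·, u)⟩`. The curves `E(·, v)` and `ψ` are absolutely continuous with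
derivatives `A v` and `Wᵀ u`, and the maximum condition rewrites `⟨v, W E(·, u)⟩` as `⟨A v, ψ⟩`,
so the cross terms are the derivative of `⟨E(·, v), ψ⟩`; this gives (a). For (b), apply (a) to
`v = w - u`, whose endpoint is `0`: then `C(w) = C(u) + C(v)`, and `C(v) ≥ 0` since otherwise
`C(r v) = r² C(v)` would make the costs over `0` unbounded below.
-/

open scoped ENNReal Matrix

theorem intervalIntegral.integral_primitive_mul_add_mul_primitive {f g : ℝ → ℝ} {a b : ℝ}
    (hf : IntervalIntegrable f volume a b) (hg : IntervalIntegrable g volume a b) (y : ℝ) :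
    ∫ s in a..b, ((∫ r in a..s, f r) * g s + f s * (y + ∫ r in a..s, g r))
      = (∫ s in a..b, f s) * (y + ∫ s in a..b, g s) := by
  have hF := hf.absolutelyContinuousOnInterval_intervalIntegral left_mem_uIcc
  have hG : AbsolutelyContinuousOnInterval (fun s => y + ∫ r in a..s, g r) a b :=
    ((LipschitzWith.const y).lipschitzOnWith.absolutelyContinuousOnInterval).add
      (hg.absolutelyContinuousOnInterval_intervalIntegral left_mem_uIcc)
  have hparts := hF.integral_deriv_mul_eq_sub hG
  rw [intervalIntegral.integral_same, zero_mul, sub_zero] at hparts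
  rw [← hparts]
  refine intervalIntegral.integral_congr_ae ?_
  filter_upwards [hf.ae_hasDerivAt_integral, hg.ae_hasDerivAt_integral] with s hfs hgs hs
  have hs' := uIoc_subset_uIcc hs
  rw [(hfs hs' a left_mem_uIcc).deriv, ((hgs hs' a left_mem_uIcc).const_add y).deriv]
  ring

theorem intervalIntegral.eval_integral {ι : Type*} [Fintype ι] {h : ℝ → ι → ℝ} {a b : ℝ}
    (hh : IntervalIntegrable h volume a b) (j : ι) :
    (∫ s in a..b, h s) j = ∫ s in a..b, h s j :=
  ((ContinuousLinearMap.proj (R := ℝ) (φ := fun _ : ι => ℝ) j).intervalIntegral_comp_comm hh).symm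

theorem IntervalIntegrable.eval {ι : Type*} [Fintype ι] {h : ℝ → ι → ℝ} {a b : ℝ}
    (hh : IntervalIntegrable h volume a b) (j : ι) :
    IntervalIntegrable (fun s => h s j) volume a b :=
  ⟨hh.1.eval j, hh.2.eval j⟩

theorem intervalIntegral.integral_primitive_dotProduct_add_dotProduct_primitive {n : ℕ}
    {f g : ℝ → Fin n → ℝ} {a b : ℝ} (hf : IntervalIntegrable f volume a b)
    (hg : IntervalIntegrable g volume a b) (y : Fin n → ℝ) :
    ∫ s in a..b, ((∫ r in a..s, f r) ⬝ᵥ g s + f s ⬝ᵥ (y + ∫ r in a..s, g r))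
      = (∫ s in a..b, f s) ⬝ᵥ (y + ∫ s in a..b, g s) := by
  have hsub : ∀ s ∈ uIcc a b, uIcc a s ⊆ uIcc a b := fun s hs =>
    uIcc_subset_uIcc left_mem_uIcc hs
  have hF := fun j => continuousOn_primitive_interval' (hf.eval j) left_mem_uIcc
  have hG := fun j => continuousOn_primitive_interval' (hg.eval j) left_mem_uIcc
  calc _ = ∫ s in a..b, ∑ j, ((∫ r in a..s, f r j) * g s j
          + f s j * (y j + ∫ r in a..s, g r j)) := by
        refine intervalIntegral.integral_congr fun s hs => ?_
        simp only [dotProduct, Pi.add_apply, ← Finset.sum_add_distrib,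
          intervalIntegral.eval_integral (hf.mono_set (hsub s hs)),
          intervalIntegral.eval_integral (hg.mono_set (hsub s hs))]
    _ = ∑ j, (∫ s in a..b, f s j) * (y j + ∫ s in a..b, g s j) := by
        have hint : ∀ j, IntervalIntegrable (fun s => (∫ r in a..s, f r j) * g s j
            + f s j * (y j + ∫ r in a..s, g r j)) volume a b := fun j =>
          ((hg.eval j).continuousOn_mul (hF j)).add
            ((hf.eval j).mul_continuousOn (continuousOn_const.add (hG j)))
        rw [intervalIntegral.integral_finsetSum fun j _ => hint j]
        exact Finset.sum_congr rfl fun j _ =>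
          integral_primitive_mul_add_mul_primitive (hf.eval j) (hg.eval j) (y j)
    _ = _ := by
        simp only [dotProduct, Pi.add_apply, intervalIntegral.eval_integral hf,
          intervalIntegral.eval_integral hg]

namespace MeasureTheory

variable {α : Type*} {mα : MeasurableSpace α} {μ : Measure α}

section Holder

variable {p q r : ℝ≥0∞} [ENNReal.HolderTriple p q r] {ι κ : Type*} [Fintype ι] [Fintype κ]

theorem MemLp.mulVec {M : α → Matrix ι κ ℝ} {u : α → κ → ℝ}
    (hM : ∀ i j, MemLp (fun x => M x i j) p μ) (hu : MemLp u q μ) :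
    MemLp (fun x => M x *ᵥ u x) r μ :=
  MemLp.of_eval fun i => memLp_finsetSum _ fun j _ => (hu.eval j).mul' (hM i j)

theorem MemLp.dotProduct {u v : α → ι → ℝ} (hu : MemLp u p μ) (hv : MemLp v q μ) :
    MemLp (fun x => u x ⬝ᵥ v x) r μ :=
  memLp_finsetSum _ fun j _ => (hv.eval j).mul' (hu.eval j)

end Holder

variable {E : Type*} [NormedAddCommGroup E]

theorem memLp_top_restrict_of_bound {s : Set α} (hs : MeasurableSet s) {f : α → E}
    (hf : AEStronglyMeasurable f μ) (C : ℝ) (hC : ∀ x ∈ s, ‖f x‖ ≤ C) :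
    MemLp f ∞ (μ.restrict s) :=
  memLp_top_of_bound hf.restrict C (ae_restrict_of_forall_mem hs hC)

theorem _root_.ContinuousOn.memLp_top_of_isCompact [TopologicalSpace α]
    [OpensMeasurableSpace α] [SecondCountableTopologyEither α E] {s : Set α} {f : α → E}
    (hs : IsCompact s) (hms : MeasurableSet s) (hf : ContinuousOn f s) : MemLp f ∞ (μ.restrict s) :=
  let ⟨C, hC⟩ := hs.exists_bound_of_continuousOn hf
  memLp_top_of_bound (hf.aestronglyMeasurable hms) C (ae_restrict_of_forall_mem hms hC)

theorem MemLp.intervalIntegrable_of_mem_Icc {p : ℝ≥0∞} {f : ℝ → E} {t0 t1 a b : ℝ}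
    (hp : 1 ≤ p) (hf : MemLp f p (volume.restrict (Icc t0 t1))) (ha : a ∈ Icc t0 t1)
    (hb : b ∈ Icc t0 t1) : IntervalIntegrable f volume a b :=
  have : IntegrableOn f (Icc t0 t1) := hf.integrable hp
  (this.mono_set (uIcc_subset_Icc ha hb)).intervalIntegrable

end MeasureTheory

theorem IsControl.memLp_top {k : ℕ} {u : ℝ → Fin k → ℝ} (hu : IsControl k u) : MemLp u ∞ :=
  let ⟨C, hC⟩ := hu.2
  memLp_top_of_bound hu.1.aestronglyMeasurable C hC

theorem IsControl.sub {k : ℕ} {u v : ℝ → Fin k → ℝ} (hu : IsControl k u)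
    (hv : IsControl k v) : IsControl k (u - v) := by
  obtain ⟨hum, Cu, hub⟩ := hu
  obtain ⟨hvm, Cv, hvb⟩ := hv
  refine ⟨hum.sub hvm, Cu + Cv, ?_⟩
  filter_upwards [hub, hvb] with s h1 h2
  exact (norm_sub_le _ _).trans (add_le_add h1 h2)

theorem IsControl.const_smul {k : ℕ} {u : ℝ → Fin k → ℝ} (hu : IsControl k u) (c : ℝ) :
    IsControl k (c • u) := by
  obtain ⟨hum, Cu, hub⟩ := hu
  refine ⟨hum.const_smul c, ‖c‖ * Cu, ?_⟩
  filter_upwards [hub] with s h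
  rw [Pi.smul_apply, norm_smul]
  exact mul_le_mul_of_nonneg_left h (norm_nonneg c)

section CharacteristicProblem

variable {k m : ℕ} {A : ℝ → Matrix (Fin m) (Fin k) ℝ} {W : ℝ → Matrix (Fin k) (Fin m) ℝ}

theorem epMap_add {a τ : ℝ} {u v : ℝ → Fin k → ℝ}
    (hu : IntervalIntegrable (fun s => A s *ᵥ u s) volume a τ)
    (hv : IntervalIntegrable (fun s => A s *ᵥ v s) volume a τ) :
    epMap k m A a τ (u + v) = epMap k m A a τ u + epMap k m A a τ v := by
  simp only [epMap, Pi.add_apply, Matrix.mulVec_add, intervalIntegral.integral_add hu hv]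

theorem epMap_smul (a τ c : ℝ) (u : ℝ → Fin k → ℝ) :
    epMap k m A a τ (c • u) = c • epMap k m A a τ u := by
  simp only [epMap, Pi.smul_apply, Matrix.mulVec_smul, intervalIntegral.integral_smul]

theorem cost_smul (a τ c : ℝ) (u : ℝ → Fin k → ℝ) :
    cost k m A W a τ (c • u) = c ^ 2 * cost k m A W a τ u := by
  simp only [cost, epMap_smul, Pi.smul_apply, Matrix.mulVec_smul, smul_dotProduct,
    dotProduct_smul, smul_eq_mul, ← intervalIntegral.integral_const_mul]
  congr 1 with s
  ring

theorem cost_nonneg_of_bddBelow {a τ : ℝ} (hbdd : BddBelow (costSet k m A W a τ 0))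
    {v : ℝ → Fin k → ℝ} (hv : IsControl k v) (hEv : epMap k m A a τ v = 0) :
    0 ≤ cost k m A W a τ v := by
  by_contra! hneg
  obtain ⟨b, hb⟩ := hbdd
  set r := √((|b| + 1) / -cost k m A W a τ v)
  have hr : r ^ 2 * cost k m A W a τ v = -(|b| + 1) := by
    rw [Real.sq_sqrt (div_nonneg (by positivity) (by linarith)), div_neg, neg_mul,
      div_mul_cancel₀ _ hneg.ne]
  have := hb ⟨r • v, hv.const_smul r, by rw [epMap_smul, hEv, smul_zero], cost_smul a τ r v⟩
  linarith [neg_abs_le b]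

variable {t0 t1 : ℝ}
  (hA : ∀ i j, MemLp (fun t => A t i j) ∞ (volume.restrict (Icc t0 t1)))
  (hW : ∀ i j, MemLp (fun t => W t i j) ∞ (volume.restrict (Icc t0 t1)))
include hA

theorem intervalIntegrable_mulVec {t : ℝ} (ht : t ∈ Icc t0 t1) {u : ℝ → Fin k → ℝ}
    (hu : MemLp u ∞ (volume.restrict (Icc t0 t1))) :
    IntervalIntegrable (fun s => A s *ᵥ u s) volume t0 t :=
  (hu.mulVec hA).intervalIntegrable_of_mem_Icc le_top (left_mem_Icc.2 (ht.1.trans ht.2)) ht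

theorem memLp_top_epMap (h : t0 ≤ t1) {u : ℝ → Fin k → ℝ}
    (hu : MemLp u ∞ (volume.restrict (Icc t0 t1))) :
    MemLp (fun s => epMap k m A t0 s u) ∞ (volume.restrict (Icc t0 t1)) := by
  have hAu := intervalIntegrable_mulVec hA (right_mem_Icc.2 h) hu
  refine ContinuousOn.memLp_top_of_isCompact isCompact_Icc measurableSet_Icc ?_
  exact (intervalIntegral.continuousOn_primitive_interval' hAu left_mem_uIcc).mono
    Icc_subset_uIcc

include hW

theorem cost_add_sub_cost_sub_cost {t : ℝ} (ht : t ∈ Icc t0 t1) {u v : ℝ → Fin k → ℝ}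
    (hu : MemLp u ∞ (volume.restrict (Icc t0 t1)))
    (hv : MemLp v ∞ (volume.restrict (Icc t0 t1))) :
    cost k m A W t0 t (u + v) - cost k m A W t0 t u - cost k m A W t0 t v
      = ∫ s in t0..t, (u s ⬝ᵥ W s *ᵥ epMap k m A t0 s v
          + v s ⬝ᵥ W s *ᵥ epMap k m A t0 s u) := by
  have h01 : t0 ≤ t1 := ht.1.trans ht.2
  have hint {x y : ℝ → Fin k → ℝ} (hx : MemLp x ∞ (volume.restrict (Icc t0 t1)))
      (hy : MemLp y ∞ (volume.restrict (Icc t0 t1))) :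
      IntervalIntegrable (fun s => x s ⬝ᵥ W s *ᵥ epMap k m A t0 s y) volume t0 t :=
    (hx.dotProduct (r := ∞) ((memLp_top_epMap hA h01 hy).mulVec (r := ∞) hW))
      |>.intervalIntegrable_of_mem_Icc le_top (left_mem_Icc.2 h01) ht
  rw [cost, cost, cost, ← intervalIntegral.integral_sub (hint (hu.add hv) (hu.add hv))
    (hint hu hu), ← intervalIntegral.integral_sub ((hint (hu.add hv) (hu.add hv)).sub
    (hint hu hu)) (hint hv hv)]
  refine intervalIntegral.integral_congr fun s hs => ?_
  have hs' : s ∈ Icc t0 t1 := by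
    rw [uIcc_of_le ht.1] at hs
    exact ⟨hs.1, hs.2.trans ht.2⟩
  rw [epMap_add (intervalIntegrable_mulVec hA hs' hu) (intervalIntegrable_mulVec hA hs' hv)]
  simp only [Pi.add_apply, Matrix.mulVec_add, add_dotProduct, dotProduct_add]
  ring

theorem cost_add_sub_cost_sub_cost_eq_epMap_dotProduct {t : ℝ} (ht : t ∈ Icc t0 t1)
    {u v : ℝ → Fin k → ℝ} (hu : MemLp u ∞ (volume.restrict (Icc t0 t1)))
    (hv : MemLp v ∞ (volume.restrict (Icc t0 t1))) {ψ1 : Fin m → ℝ} {ψ : ℝ → Fin m → ℝ}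
    (hψ : ∀ s, ψ s = ψ1 + ∫ r in t0..s, (W r)ᵀ *ᵥ u r)
    (hmax : ∀ᵐ s, s ∈ Icc t0 t1 → (A s)ᵀ *ᵥ ψ s = W s *ᵥ epMap k m A t0 s u) :
    cost k m A W t0 t (u + v) - cost k m A W t0 t u - cost k m A W t0 t v
      = epMap k m A t0 t v ⬝ᵥ ψ t := by
  have h01 : t0 ≤ t1 := ht.1.trans ht.2
  have hAv := intervalIntegrable_mulVec hA ht hv
  have hWu := (hu.mulVec (M := fun s => (W s)ᵀ) fun i j => hW j i)
    |>.intervalIntegrable_of_mem_Icc le_top (left_mem_Icc.2 h01) ht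
  rw [cost_add_sub_cost_sub_cost hA hW ht hu hv, hψ t, epMap,
    ← intervalIntegral.integral_primitive_dotProduct_add_dotProduct_primitive hAv hWu ψ1]
  refine intervalIntegral.integral_congr_ae ?_
  filter_upwards [hmax] with s hmax_s hs
  rw [uIoc_of_le ht.1] at hs
  rw [← hmax_s ⟨hs.1.le, hs.2.trans ht.2⟩, ← hψ s, Matrix.dotProduct_mulVec,
    Matrix.dotProduct_mulVec, Matrix.vecMul_transpose, dotProduct_comm _ ((W s)ᵀ *ᵥ u s),
    Matrix.mulVec_transpose, epMap]

end CharacteristicProblem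

theorem normal_extremal_is_solution_general
    (t0 t1 : ℝ) (k m : ℕ)
    (A : ℝ → Matrix (Fin m) (Fin k) ℝ)
    (hAmeas : ∀ i j, Measurable fun t => A t i j)
    (hAbdd : ∃ C : ℝ, ∀ t ∈ Set.Icc t0 t1, ∀ i j, |A t i j| ≤ C)
    (W : ℝ → Matrix (Fin k) (Fin m) ℝ)
    (hWmeas : ∀ i j, Measurable fun t => W t i j)
    (hWbdd : ∃ C : ℝ, ∀ t ∈ Set.Icc t0 t1, ∀ i j, |W t i j| ≤ C)
    (Δu : ℝ → Fin k → ℝ) (hΔu : IsControl k Δu)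
    (ψ1 : Fin m → ℝ) (ψ : ℝ → Fin m → ℝ)
    (hψ : ∀ t : ℝ, ψ t = ψ1 + ∫ s in t0..t, (W s).transpose.mulVec (Δu s))
    (hmax : ∀ᵐ t : ℝ, t ∈ Set.Icc t0 t1 →
      (A t).transpose.mulVec (ψ t) = (W t).mulVec (epMap k m A t0 t Δu)) :
    (∀ Δv : ℝ → Fin k → ℝ, IsControl k Δv → ∀ t ∈ Set.Icc t0 t1,
      cost k m A W t0 t (Δu + Δv) - cost k m A W t0 t Δu -
          cost k m A W t0 t Δv
        = dotProduct (epMap k m A t0 t Δv) (ψ t)) ∧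
    (∀ t ∈ Set.Icc t0 t1, BddBelow (costSet k m A W t0 t 0) →
      ∀ w : ℝ → Fin k → ℝ, IsControl k w →
        epMap k m A t0 t w = epMap k m A t0 t Δu →
        cost k m A W t0 t Δu ≤ cost k m A W t0 t w) := by
  obtain ⟨CA, hCA⟩ := hAbdd
  obtain ⟨CW, hCW⟩ := hWbdd
  have hA i j : MemLp (fun t => A t i j) ∞ (volume.restrict (Icc t0 t1)) :=
    memLp_top_restrict_of_bound measurableSet_Icc (hAmeas i j).aestronglyMeasurable CA
      fun t ht => hCA t ht i j
  have hW i j : MemLp (fun t => W t i j) ∞ (volume.restrict (Icc t0 t1)) :=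
    memLp_top_restrict_of_bound measurableSet_Icc (hWmeas i j).aestronglyMeasurable CW
      fun t ht => hCW t ht i j
  have hu := hΔu.memLp_top.restrict (Icc t0 t1)
  have part_a : ∀ Δv : ℝ → Fin k → ℝ, IsControl k Δv → ∀ t ∈ Icc t0 t1,
      cost k m A W t0 t (Δu + Δv) - cost k m A W t0 t Δu - cost k m A W t0 t Δv
        = epMap k m A t0 t Δv ⬝ᵥ ψ t := fun Δv hΔv t ht =>
    cost_add_sub_cost_sub_cost_eq_epMap_dotProduct hA hW ht hu (hΔv.memLp_top.restrict _) hψ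
      hmax
  refine ⟨part_a, fun t ht hbdd w hw hEw => ?_⟩
  have hv := hw.sub hΔu
  have hsum : Δu + (w - Δu) = w := add_sub_cancel Δu w
  have hEv : epMap k m A t0 t (w - Δu) = 0 := by
    have := epMap_add (intervalIntegrable_mulVec hA ht hu)
      (intervalIntegrable_mulVec hA ht (hv.memLp_top.restrict _))
    rwa [hsum, hEw, left_eq_add] at this
  have hcross := part_a _ hv t ht
  rw [hsum, hEv, zero_dotProduct] at hcross
  linarith [cost_nonneg_of_bddBelow hbdd hv hEv]

/-- **Proposition 4.20 together with Lemma 4.22 (i), sufficiency.** Normal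
Pontryagin extremals of the characteristic optimal control problem are its
solutions. Let `ψ(t) = ψ1 + ∫_{t0}^t W(s)ᵀ·Δu(s) ds` be the adjoint curve and
assume the maximum condition `A(t)ᵀ·ψ(t) = W(t)·E(t,Δu)` a.e. on `[t0,t1]`.
Then (a) for every control `Δv` and `t ∈ [t0,t1]`,
`C(t,Δu+Δv) − C(t,Δu) − C(t,Δv) = ⟨E(t,Δv), ψ(t)⟩`; and (b) if for some
`t ∈ [t0,t1]` the cost set over `0` is bounded below, then `Δu` minimizes the
cost among controls with the same endpoint at time `t`. -/
theorem normal_extremal_is_solution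
    (t0 t1 : ℝ) (ht : t0 < t1) (k m : ℕ)
    (A : ℝ → Matrix (Fin m) (Fin k) ℝ)
    (hAmeas : ∀ i j, Measurable fun t => A t i j)
    (hAbdd : ∃ C : ℝ, ∀ t ∈ Set.Icc t0 t1, ∀ i j, |A t i j| ≤ C)
    (W : ℝ → Matrix (Fin k) (Fin m) ℝ)
    (hWmeas : ∀ i j, Measurable fun t => W t i j)
    (hWbdd : ∃ C : ℝ, ∀ t ∈ Set.Icc t0 t1, ∀ i j, |W t i j| ≤ C)
    (Δu : ℝ → Fin k → ℝ) (hΔu : IsControl k Δu)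
    (ψ1 : Fin m → ℝ) (ψ : ℝ → Fin m → ℝ)
    (hψ : ∀ t : ℝ, ψ t = ψ1 + ∫ s in t0..t, (W s).transpose.mulVec (Δu s))
    (hmax : ∀ᵐ t : ℝ, t ∈ Set.Icc t0 t1 →
      (A t).transpose.mulVec (ψ t) = (W t).mulVec (epMap k m A t0 t Δu)) :
    (∀ Δv : ℝ → Fin k → ℝ, IsControl k Δv → ∀ t ∈ Set.Icc t0 t1,
      cost k m A W t0 t (Δu + Δv) - cost k m A W t0 t Δu -
          cost k m A W t0 t Δv
        = dotProduct (epMap k m A t0 t Δv) (ψ t)) ∧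
    (∀ t ∈ Set.Icc t0 t1, BddBelow (costSet k m A W t0 t 0) →
      ∀ w : ℝ → Fin k → ℝ, IsControl k w →
        epMap k m A t0 t w = epMap k m A t0 t Δu →
        cost k m A W t0 t Δu ≤ cost k m A W t0 t w) :=
  normal_extremal_is_solution_general t0 t1 k m A hAmeas hAbdd W hWmeas hWbdd Δu hΔu ψ1 ψ hψ hmax
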